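/- Let f : ℍ → ℍ be a holomorphic map whose iterates f^n converge to ∞ uniformly on compact subsets, and suppose that: (i) (Im f^{n+1}(1) − Im f^n(1))/Re f^n(1) → b for some real b ≠ 0; (ii) the sequence {Im f^n(1)} is eventually of constant (nonzero) sign; and (iii) the sequence {Re f^n(1)} is non-decreasing. Then the sequence {|f^n(1)|} is eventually strictly increasing, and consequently, for the geodesic γ(t) = 1 + t (t ≥ 0), the sequence {d_ℍ(1, π_γ(f^n(1)))} of distances to the projections of the orbit onto γ is eventually strictly increasing, where π_γ(f^n(1)) = |f^n(1)| for all large n. -/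

import Mathlib

open Complex Filter Topology

/-- Pseudo-hyperbolic distance on the right half-plane ℍ = {Re z > 0}. -/
noncomputable def rhoH (z w : ℂ) : ℝ := ‖(z - w) / (z + (starRingEnd ℂ) w)‖

/-- Hyperbolic distance on the right half-plane. -/
noncomputable def dH (z w : ℂ) : ℝ := (1/2) * Real.log ((1 + rhoH z w) / (1 - rhoH z w))

/-- `p` is a hyperbolic projection of `z` onto the curve `γ : [0,∞) → ℍ`. -/
def IsProjH (γ : ℝ → ℂ) (z p : ℂ) : Prop :=
  (∃ t ≥ (0:ℝ), p = γ t) ∧ ∀ t ≥ (0:ℝ), dH z p ≤ dH z (γ t)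

/-- `f` is a hyperbolic holomorphic self-map of the right half-plane with
Denjoy–Wolff point ∞: it preserves ℍ, is holomorphic on ℍ, its iterates tend to ∞
uniformly on compact subsets of ℍ, and `f(z)/z → c` for some `c > 1` as `z → ∞`
within every sector `{|arg z| < φ}`, `φ ∈ (0, π/2)`. -/
def HyperbolicAtInf (f : ℂ → ℂ) : Prop :=
  (∀ z : ℂ, 0 < z.re → 0 < (f z).re) ∧
  DifferentiableOn ℂ f {z : ℂ | 0 < z.re} ∧
  (∀ K : Set ℂ, K ⊆ {z : ℂ | 0 < z.re} → IsCompact K →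
    ∀ M : ℝ, ∃ N : ℕ, ∀ n ≥ N, ∀ z ∈ K, M < ‖f^[n] z‖) ∧
  (∃ c : ℝ, 1 < c ∧ ∀ φ ∈ Set.Ioo (0:ℝ) (Real.pi/2), ∀ ε > (0:ℝ), ∃ R : ℝ,
    ∀ z : ℂ, 0 < z.re → |z.arg| < φ → R < ‖z‖ →
      ‖f z / z - (c:ℂ)‖ < ε)

/-!
Since `Re fⁿ(1)` is nondecreasing and starts at `1`, hypothesis (i) makes the increments of
`Im fⁿ(1)` eventually of the sign of `b` and of size at least `|b|/2`; hence `Im fⁿ(1)` tends to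
`±∞` monotonically, `|Im fⁿ(1)|` eventually increases strictly, and so does `|fⁿ(1)|`.
For the geometry, `dH = artanh ∘ rhoH` on `ℍ`. Among the points `t > 0` of the real axis,
`rhoH z t = |z - t| / |z + t|` is smallest at `t = |z|`, which gives the projection, and
`dH 1 r = artanh ((r - 1) / (r + 1))` increases with `r ≥ 1`.
-/

lemma normSq_add_conj_sub_normSq_sub (z w : ℂ) :
    normSq (z + (starRingEnd ℂ) w) - normSq (z - w) = 4 * z.re * w.re := by
  simp only [normSq_apply, add_re, add_im, sub_re, sub_im, conj_re, conj_im]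
  ring

lemma rhoH_nonneg (z w : ℂ) : 0 ≤ rhoH z w := norm_nonneg _

lemma rhoH_lt_one {z w : ℂ} (hz : 0 < z.re) (hw : 0 < w.re) : rhoH z w < 1 := by
  have hgap := normSq_add_conj_sub_normSq_sub z w
  have hsq : ‖z - w‖ ^ 2 < ‖z + (starRingEnd ℂ) w‖ ^ 2 := by
    rw [Complex.sq_norm, Complex.sq_norm]
    nlinarith [mul_pos hz hw]
  have hden : 0 < ‖z + (starRingEnd ℂ) w‖ :=
    lt_of_le_of_lt (norm_nonneg _) (lt_of_pow_lt_pow_left₀ 2 (norm_nonneg _) hsq)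
  rw [rhoH, norm_div, div_lt_one hden]
  exact lt_of_pow_lt_pow_left₀ 2 (norm_nonneg _) hsq

lemma dH_eq_artanh {z w : ℂ} (hz : 0 < z.re) (hw : 0 < w.re) :
    dH z w = Real.artanh (rhoH z w) := by
  rw [dH, Real.artanh_eq_half_log
    ⟨by linarith [rhoH_nonneg z w], (rhoH_lt_one hz hw).le⟩]

lemma dH_le_dH_of_rhoH_le {z w w' : ℂ} (hz : 0 < z.re) (hw : 0 < w.re) (hw' : 0 < w'.re)
    (h : rhoH z w ≤ rhoH z w') : dH z w ≤ dH z w' := by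
  rw [dH_eq_artanh hz hw, dH_eq_artanh hz hw']
  exact Real.artanh_le_artanh (by linarith [rhoH_nonneg z w]) (rhoH_lt_one hz hw') h

lemma dH_lt_dH_of_rhoH_lt {z w w' : ℂ} (hz : 0 < z.re) (hw : 0 < w.re) (hw' : 0 < w'.re)
    (h : rhoH z w < rhoH z w') : dH z w < dH z w' := by
  rw [dH_eq_artanh hz hw, dH_eq_artanh hz hw']
  exact Real.artanh_lt_artanh (by linarith [rhoH_nonneg z w]) (rhoH_lt_one hz hw') h

lemma rhoH_ofReal (z : ℂ) (s : ℝ) : rhoH z s = ‖z - s‖ / ‖z + s‖ := by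
  simp [rhoH, Complex.conj_ofReal]

lemma rhoH_ofReal_norm_le {z : ℂ} (hz : 0 < z.re) {t : ℝ} (ht : 0 < t) :
    rhoH z ‖z‖ ≤ rhoH z t := by
  have hr : 0 < ‖z‖ := norm_pos_iff.mpr fun h ↦ by simp [h] at hz
  have hnorm_sq : ‖z‖ ^ 2 = z.re ^ 2 + z.im ^ 2 := by
    rw [Complex.sq_norm, normSq_apply]; ring
  have hden : ∀ s : ℝ, 0 < s → 0 < ‖z + s‖ := fun s hs ↦
    lt_of_lt_of_le (by simpa using add_pos hz hs) (re_le_norm _)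
  rw [rhoH_ofReal, rhoH_ofReal, div_le_div_iff₀ (hden _ hr) (hden t ht)]
  -- after squaring, the difference of the two sides is `4 ‖z‖ z.re (t - ‖z‖)²`
  have hsq : (‖z - ‖z‖‖ * ‖z + t‖) ^ 2 ≤ (‖z - t‖ * ‖z + ‖z‖‖) ^ 2 := by
    simp only [mul_pow, Complex.sq_norm, normSq_apply, add_re, add_im, sub_re, sub_im,
      ofReal_re, ofReal_im, sub_zero, add_zero]
    nlinarith [mul_nonneg (mul_nonneg hz.le hr.le) (sq_nonneg (t - ‖z‖))]
  exact le_of_pow_le_pow_left₀ two_ne_zero (by positivity) hsq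

lemma isProjH_norm {z : ℂ} (hz : 0 < z.re) (hz1 : 1 ≤ ‖z‖) :
    IsProjH (fun t : ℝ ↦ 1 + (t : ℂ)) z ‖z‖ := by
  refine ⟨⟨‖z‖ - 1, by linarith, by push_cast; ring⟩, fun t ht ↦ ?_⟩
  have ht1 : (0 : ℝ) < 1 + t := by linarith
  show dH z ‖z‖ ≤ dH z (1 + t)
  rw [show (1 : ℂ) + t = ((1 + t : ℝ) : ℂ) by push_cast; rfl]
  exact dH_le_dH_of_rhoH_le hz (by simpa using hz1.trans_lt' one_pos) (by simpa using ht1)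
    (rhoH_ofReal_norm_le hz ht1)

lemma rhoH_one_ofReal {r : ℝ} (hr : 1 ≤ r) : rhoH 1 r = (r - 1) / (r + 1) := by
  rw [rhoH_ofReal, show (1 : ℂ) - r = ((1 - r : ℝ) : ℂ) by push_cast; rfl,
    show (1 : ℂ) + r = ((1 + r : ℝ) : ℂ) by push_cast; rfl, norm_real, norm_real,
    Real.norm_of_nonpos (by linarith), Real.norm_of_nonneg (by linarith)]
  ring

lemma dH_one_ofReal_strictMonoOn : StrictMonoOn (fun r : ℝ ↦ dH 1 r) (Set.Ici 1) := by
  intro r (hr : 1 ≤ r) s (hs : 1 ≤ s) hrs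
  refine dH_lt_dH_of_rhoH_lt one_pos (by rw [ofReal_re]; linarith) (by rw [ofReal_re]; linarith) ?_
  rw [rhoH_one_ofReal hr, rhoH_one_ofReal hs, div_lt_div_iff₀ (by linarith) (by linarith)]
  nlinarith

lemma norm_lt_norm_of_re_le_of_abs_im_lt {z w : ℂ} (hz : 0 ≤ z.re) (hre : z.re ≤ w.re)
    (him : |z.im| < |w.im|) : ‖z‖ < ‖w‖ := by
  have hsq : ‖z‖ ^ 2 < ‖w‖ ^ 2 := by
    rw [Complex.sq_norm, Complex.sq_norm, normSq_apply, normSq_apply, ← abs_mul_abs_self z.im,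
      ← abs_mul_abs_self w.im]
    nlinarith [abs_nonneg z.im]
  exact lt_of_pow_lt_pow_left₀ 2 (norm_nonneg _) hsq

lemma tendsto_atTop_of_eventually_le_sub {u : ℕ → ℝ} {c : ℝ} (hc : 0 < c)
    (h : ∀ᶠ n in atTop, c ≤ u (n + 1) - u n) : Tendsto u atTop atTop := by
  obtain ⟨N, hN⟩ := eventually_atTop.mp h
  have hlin : ∀ n ≥ N, u N + ((n : ℝ) - N) * c ≤ u n := by
    intro n hn
    induction n, hn using Nat.le_induction with
    | base => simp
    | succ n hn ih => push_cast; linarith [hN n hn]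
  refine tendsto_atTop_mono' atTop (eventually_atTop.mpr ⟨N, hlin⟩) ?_
  refine tendsto_atTop_add_const_left _ _ (Tendsto.atTop_mul_const hc ?_)
  exact tendsto_atTop_add_const_right _ _ tendsto_natCast_atTop_atTop

lemma eventually_abs_lt_abs_succ_of_le_sub {u : ℕ → ℝ} {c : ℝ} (hc : 0 < c)
    (h : ∀ᶠ n in atTop, c ≤ u (n + 1) - u n) : ∀ᶠ n in atTop, |u n| < |u (n + 1)| := by
  filter_upwards [h, (tendsto_atTop_of_eventually_le_sub hc h).eventually_ge_atTop 0]
    with n hstep hpos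
  rw [abs_of_nonneg hpos, abs_of_nonneg (by linarith)]
  linarith

lemma eventually_le_of_tendsto_div {d x : ℕ → ℝ} {b : ℝ} (hb : 0 < b) (hx : ∀ n, 1 ≤ x n)
    (h : Tendsto (fun n ↦ d n / x n) atTop (𝓝 b)) : ∀ᶠ n in atTop, b / 2 ≤ d n := by
  filter_upwards [h.eventually (lt_mem_nhds (half_lt_self hb))] with n hn
  have hxn := hx n
  calc b / 2 ≤ b / 2 * x n := le_mul_of_one_le_right (by linarith) hxn
    _ ≤ d n / x n * x n := by gcongr
    _ = d n := div_mul_cancel₀ _ (by linarith)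

lemma eventually_abs_lt_abs_succ_of_tendsto_div {u x : ℕ → ℝ} {b : ℝ} (hb : b ≠ 0)
    (hx : ∀ n, 1 ≤ x n) (h : Tendsto (fun n ↦ (u (n + 1) - u n) / x n) atTop (𝓝 b)) :
    ∀ᶠ n in atTop, |u n| < |u (n + 1)| := by
  rcases hb.lt_or_gt with hb | hb
  · have hneg : Tendsto (fun n ↦ (-u (n + 1) - -u n) / x n) atTop (𝓝 (-b)) := by
      convert h.neg using 2 with n
      ring
    filter_upwards [eventually_abs_lt_abs_succ_of_le_sub (u := fun n ↦ -u n) (by linarith)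
      (eventually_le_of_tendsto_div (d := fun n ↦ -u (n + 1) - -u n) (neg_pos.mpr hb) hx hneg)]
      with n hn
    simpa only [abs_neg] using hn
  · exact eventually_abs_lt_abs_succ_of_le_sub (by linarith)
      (eventually_le_of_tendsto_div (d := fun n ↦ u (n + 1) - u n) hb hx h)

theorem stmt19_general (f : ℂ → ℂ)
    (b : ℝ) (hb : b ≠ 0)
    (hi : Tendsto (fun n : ℕ =>
        ((f^[n+1] 1).im - (f^[n] 1).im) / (f^[n] 1).re) atTop (𝓝 b))
    (hiii : Monotone fun n : ℕ => (f^[n] 1).re) :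
    (∃ N : ℕ, ∀ n ≥ N, ‖f^[n] 1‖ < ‖f^[n+1] 1‖) ∧
    (∃ N : ℕ, ∀ n ≥ N,
        IsProjH (fun t : ℝ => 1 + (t : ℂ)) (f^[n] 1) ((‖f^[n] 1‖ : ℂ))) ∧
    (∃ N : ℕ, ∀ n ≥ N,
        dH 1 ((‖f^[n] 1‖ : ℂ)) < dH 1 ((‖f^[n+1] 1‖ : ℂ))) := by
  have hre : ∀ n, 1 ≤ (f^[n] 1).re := fun n ↦ by simpa using hiii (Nat.zero_le n)
  have hnorm : ∀ n, 1 ≤ ‖f^[n] 1‖ := fun n ↦ (hre n).trans (re_le_norm _)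
  obtain ⟨N, hN⟩ := eventually_atTop.mp (eventually_abs_lt_abs_succ_of_tendsto_div
    (u := fun n ↦ (f^[n] 1).im) (x := fun n ↦ (f^[n] 1).re) hb hre hi)
  have hmono : ∀ n ≥ N, ‖f^[n] 1‖ < ‖f^[n+1] 1‖ := fun n hn ↦
    norm_lt_norm_of_re_le_of_abs_im_lt (by linarith [hre n]) (hiii n.le_succ) (hN n hn)
  exact ⟨⟨N, hmono⟩, ⟨0, fun n _ ↦ isProjH_norm (by linarith [hre n]) (hnorm n)⟩,
    ⟨N, fun n hn ↦ dH_one_ofReal_strictMonoOn (hnorm n) (hnorm (n + 1)) (hmono n hn)⟩⟩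

/-- under conditions (i)–(iii) (satisfied by parabolic maps of
positive hyperbolic step), the sequence {|f^n(1)|} is eventually strictly
increasing; consequently, for the geodesic γ(t) = 1 + t, the projection of
f^n(1) onto γ is |f^n(1)| for all large n, and the orthogonal speed
{d_ℍ(1, π_γ(f^n(1)))} is eventually strictly increasing. -/
theorem stmt19 (f : ℂ → ℂ)
    (hmap : ∀ z : ℂ, 0 < z.re → 0 < (f z).re)
    (hdiff : DifferentiableOn ℂ f {z : ℂ | 0 < z.re})
    (hconv : ∀ K : Set ℂ, K ⊆ {z : ℂ | 0 < z.re} → IsCompact K →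
      ∀ M : ℝ, ∃ N : ℕ, ∀ n ≥ N, ∀ z ∈ K, M < ‖f^[n] z‖)
    (b : ℝ) (hb : b ≠ 0)
    (hi : Tendsto (fun n : ℕ =>
        ((f^[n+1] 1).im - (f^[n] 1).im) / (f^[n] 1).re) atTop (𝓝 b))
    (hii : (∃ N : ℕ, ∀ n ≥ N, 0 < (f^[n] 1).im) ∨ (∃ N : ℕ, ∀ n ≥ N, (f^[n] 1).im < 0))
    (hiii : Monotone fun n : ℕ => (f^[n] 1).re) :
    (∃ N : ℕ, ∀ n ≥ N, ‖f^[n] 1‖ < ‖f^[n+1] 1‖) ∧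
    (∃ N : ℕ, ∀ n ≥ N,
        IsProjH (fun t : ℝ => 1 + (t : ℂ)) (f^[n] 1) ((‖f^[n] 1‖ : ℂ))) ∧
    (∃ N : ℕ, ∀ n ≥ N,
        dH 1 ((‖f^[n] 1‖ : ℂ)) < dH 1 ((‖f^[n+1] 1‖ : ℂ))) :=
  stmt19_general f b hb hi hiii
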